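/- Let j₀ be a compatible positive complex structure on (E, ω) and let j be a complex structure on E compatible with ω such that Λ^{1,0}_j E*, viewed inside E* ⊗ ℂ = Λ^{1,0}_{j₀}E* ⊕ Λ^{0,1}_{j₀}E*, is the graph of a ℂ-linear map μ : Λ^{1,0}_{j₀}E* → Λ^{0,1}_{j₀}E*. Then j is positive if and only if the endomorphism Id − μᵗ ∘ μ̄ᵗ of E^{1,0}_{j₀} is positive definite for the Hermitian inner product h(X, Y) := −i·ω(X, Ȳ) on E^{1,0}_{j₀} (which is positive definite since j₀ is compatible and positive); that is, h((Id − μᵗ∘μ̄ᵗ)X, X) > 0 for all X ∈ E^{1,0}_{j₀} with X ≠ 0. Here μ̄ : Λ^{0,1}_{j₀}E* → Λ^{1,0}_{j₀}E* is the conjugate map μ̄(α) := conj(μ(conj α)), μᵗ : E^{0,1}_{j₀} → E^{1,0}_{j₀} and μ̄ᵗ : E^{1,0}_{j₀} → E^{0,1}_{j₀} are the transposes (characterized by α(μᵗX) = (μα)(X) and β(μ̄ᵗX) = (μ̄β)(X)), ω is extended ℂ-bilinearly to E ⊗ ℂ, and Ȳ denotes the conjugate of Y in E ⊗ ℂ.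 -/

import Mathlib

open Complex TensorProduct

noncomputable section

variable {E : Type*} [AddCommGroup E] [Module ℝ E]

/-- `j` is a complex structure on `E`: `j ∘ j = -id`. -/
def IsCplxStruct (j : E →ₗ[ℝ] E) : Prop := ∀ x : E, j (j x) = -x

/-- `j` is compatible with the symplectic form `ω`. -/
def OmCompat (ω : LinearMap.BilinForm ℝ E) (j : E →ₗ[ℝ] E) : Prop :=
  ∀ x y : E, ω (j x) (j y) = ω x y

/-- `j` is positive with respect to `ω`. -/
def OmPos (ω : LinearMap.BilinForm ℝ E) (j : E →ₗ[ℝ] E) : Prop :=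
  ∀ x : E, x ≠ 0 → 0 < ω x (j x)

/-- `ω` is alternating. -/
def OmAlt (ω : LinearMap.BilinForm ℝ E) : Prop := ∀ x : E, ω x x = 0

/-- `ω` is nondegenerate. -/
def OmNondeg (ω : LinearMap.BilinForm ℝ E) : Prop :=
  ∀ x : E, (∀ y : E, ω x y = 0) → x = 0

/-- The `ℂ`-linear extension of `j` to the complexification `ℂ ⊗[ℝ] E`. -/
def cplxExt (j : E →ₗ[ℝ] E) : Module.End ℂ (ℂ ⊗[ℝ] E) := j.baseChange ℂ

/-- `E^{1,0}_j`: the `i`-eigenspace of the `ℂ`-linear extension of `j`. -/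
def E10 (j : E →ₗ[ℝ] E) : Submodule ℂ (ℂ ⊗[ℝ] E) :=
  Module.End.eigenspace (cplxExt j) Complex.I

/-- `E^{0,1}_j`: the `(-i)`-eigenspace of the `ℂ`-linear extension of `j`. -/
def E01 (j : E →ₗ[ℝ] E) : Submodule ℂ (ℂ ⊗[ℝ] E) :=
  Module.End.eigenspace (cplxExt j) (-Complex.I)

/-- `Λ^{1,0}_j E*`: `ℂ`-valued `ℝ`-linear forms with `α (j v) = i · α v`. -/
def Lam10 (j : E →ₗ[ℝ] E) : Submodule ℂ (E →ₗ[ℝ] ℂ) where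
  carrier := {α | ∀ x : E, α (j x) = Complex.I * α x}
  add_mem' := by
    intro a b ha hb x
    simp only [LinearMap.add_apply, ha x, hb x]; ring
  zero_mem' := by intro x; simp
  smul_mem' := by
    intro c a ha x
    simp only [LinearMap.smul_apply, ha x, smul_eq_mul]; ring

/-- `Λ^{0,1}_j E*`: `ℂ`-valued `ℝ`-linear forms with `α (j v) = -i · α v`. -/
def Lam01 (j : E →ₗ[ℝ] E) : Submodule ℂ (E →ₗ[ℝ] ℂ) where
  carrier := {α | ∀ x : E, α (j x) = -(Complex.I * α x)}
  add_mem' := by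
    intro a b ha hb x
    simp only [LinearMap.add_apply, ha x, hb x]; ring
  zero_mem' := by intro x; simp
  smul_mem' := by
    intro c a ha x
    simp only [LinearMap.smul_apply, ha x, smul_eq_mul]; ring

/-- The `ℂ`-linear extension of a `ℂ`-valued `ℝ`-linear form to `ℂ ⊗[ℝ] E`. -/
def extendC (α : E →ₗ[ℝ] ℂ) : (ℂ ⊗[ℝ] E) →ₗ[ℂ] ℂ :=
  TensorProduct.AlgebraTensorModule.lift (LinearMap.toSpanSingleton ℂ (E →ₗ[ℝ] ℂ) α)

/-- The `ℂ`-bilinear extension of `ω` to `ℂ ⊗[ℝ] E`. -/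
def omC (ω : LinearMap.BilinForm ℝ E) : LinearMap.BilinForm ℂ (ℂ ⊗[ℝ] E) :=
  ω.baseChange ℂ

/-- Complex conjugation on `ℂ ⊗[ℝ] E`. -/
def conjTensor : (ℂ ⊗[ℝ] E) →ₗ[ℝ] (ℂ ⊗[ℝ] E) :=
  TensorProduct.map Complex.conjAe.toLinearMap LinearMap.id

/-- The conjugate of a `ℂ`-valued `ℝ`-linear form. -/
def conjForm (α : E →ₗ[ℝ] ℂ) : E →ₗ[ℝ] ℂ :=
  Complex.conjAe.toLinearMap ∘ₗ α

/-!
Since `Λ^{1,0}_j E*` is the graph of `μ`, its annihilator `E^{0,1}_j` consists of the vectors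
`W - μᵗ W` with `W ∈ E^{0,1}_{j₀}`; conjugating, `E^{1,0}_j = {X - μ̄ᵗ X | X ∈ E^{1,0}_{j₀}}`.
Every real vector is `x = Z + Z̄` with `Z ∈ E^{1,0}_j`, and `ω(x, jx) = 2 · (-i) ω(Z, Z̄)`.
For `Z = X - μ̄ᵗ X`, the isotropy of `E^{1,0}_{j₀}` and `E^{0,1}_{j₀}` together with the
`ω`-symmetry of `μᵗ` (which is the isotropy of `E^{0,1}_j`) gives `ω(Z, Z̄) = ω(X - μᵗ μ̄ᵗ X, X̄)`.
-/
open ComplexConjugate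

@[simp] lemma extendC_tmul (α : E →ₗ[ℝ] ℂ) (c : ℂ) (x : E) :
    extendC α (c ⊗ₜ[ℝ] x) = c * α x := by
  simp [extendC]

lemma extendC_add (α β : E →ₗ[ℝ] ℂ) : extendC (α + β) = extendC α + extendC β :=
  TensorProduct.AlgebraTensorModule.ext fun c x => by simp [mul_add]

@[simp] lemma cplxExt_tmul (j : E →ₗ[ℝ] E) (c : ℂ) (x : E) :
    cplxExt j (c ⊗ₜ[ℝ] x) = c ⊗ₜ[ℝ] j x := rfl

@[simp] lemma conjTensor_tmul (c : ℂ) (x : E) :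
    conjTensor (c ⊗ₜ[ℝ] x) = conj c ⊗ₜ[ℝ] x := rfl

@[simp] lemma conjForm_apply (α : E →ₗ[ℝ] ℂ) (x : E) :
    conjForm α x = conj (α x) := rfl

@[simp] lemma conjTensor_conjTensor (v : ℂ ⊗[ℝ] E) : conjTensor (conjTensor v) = v := by
  induction v using TensorProduct.induction_on with
  | zero => simp
  | tmul c x => simp
  | add u w hu hw => simp [hu, hw]

@[simp] lemma conjForm_conjForm (α : E →ₗ[ℝ] ℂ) : conjForm (conjForm α) = α := by
  ext x; simp

lemma conjTensor_smul (c : ℂ) (v : ℂ ⊗[ℝ] E) :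
    conjTensor (c • v) = conj c • conjTensor v := by
  induction v using TensorProduct.induction_on with
  | zero => simp
  | tmul a x => simp [TensorProduct.smul_tmul']
  | add u w hu hw => simp [hu, hw]

lemma conjTensor_cplxExt (j : E →ₗ[ℝ] E) (v : ℂ ⊗[ℝ] E) :
    conjTensor (cplxExt j v) = cplxExt j (conjTensor v) := by
  induction v using TensorProduct.induction_on with
  | zero => simp
  | tmul a x => simp
  | add u w hu hw => simp [hu, hw]

lemma extendC_conjForm (α : E →ₗ[ℝ] ℂ) (v : ℂ ⊗[ℝ] E) :
    extendC (conjForm α) v = conj (extendC α (conjTensor v)) := by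
  induction v using TensorProduct.induction_on with
  | zero => simp
  | tmul c x => simp
  | add u w hu hw => simp [hu, hw]

lemma cplxExt_cplxExt {j : E →ₗ[ℝ] E} (hj : IsCplxStruct j) (v : ℂ ⊗[ℝ] E) :
    cplxExt j (cplxExt j v) = -v := by
  induction v using TensorProduct.induction_on with
  | zero => simp
  | tmul a x => simp [hj x, TensorProduct.tmul_neg]
  | add u w hu hw => simp [hu, hw]; abel

lemma mem_E10 {j : E →ₗ[ℝ] E} {v : ℂ ⊗[ℝ] E} :
    v ∈ E10 j ↔ cplxExt j v = I • v := Module.End.mem_eigenspace_iff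

lemma mem_E01 {j : E →ₗ[ℝ] E} {v : ℂ ⊗[ℝ] E} :
    v ∈ E01 j ↔ cplxExt j v = (-I) • v := Module.End.mem_eigenspace_iff

lemma disjoint_E10_E01 (j : E →ₗ[ℝ] E) : Disjoint (E10 j) (E01 j) :=
  Module.End.disjoint_genEigenspace _ (by simp [Complex.ext_iff]; norm_num) 1 1

lemma conjTensor_mem_E01 {j : E →ₗ[ℝ] E} {v : ℂ ⊗[ℝ] E} (hv : v ∈ E10 j) :
    conjTensor v ∈ E01 j := by
  rw [mem_E10] at hv
  rw [mem_E01, ← conjTensor_cplxExt, hv, conjTensor_smul, conj_I]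

lemma conjTensor_mem_E10 {j : E →ₗ[ℝ] E} {v : ℂ ⊗[ℝ] E} (hv : v ∈ E01 j) :
    conjTensor v ∈ E10 j := by
  rw [mem_E01] at hv
  rw [mem_E10, ← conjTensor_cplxExt, hv, conjTensor_smul, map_neg, conj_I, neg_neg]

lemma conjForm_mem_Lam10 {j : E →ₗ[ℝ] E} {α : E →ₗ[ℝ] ℂ} (hα : α ∈ Lam01 j) :
    conjForm α ∈ Lam10 j := fun x => by
  simp [show α (j x) = _ from hα x]

lemma conjForm_mem_Lam01 {j : E →ₗ[ℝ] E} {α : E →ₗ[ℝ] ℂ} (hα : α ∈ Lam10 j) :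
    conjForm α ∈ Lam01 j := fun x => by
  simp [show α (j x) = _ from hα x]

lemma extendC_cplxExt_of_mem_Lam10 {j : E →ₗ[ℝ] E} {α : E →ₗ[ℝ] ℂ} (hα : α ∈ Lam10 j)
    (v : ℂ ⊗[ℝ] E) : extendC α (cplxExt j v) = I * extendC α v := by
  induction v using TensorProduct.induction_on with
  | zero => simp
  | tmul c x => simp [show α (j x) = _ from hα x]; ring
  | add u w hu hw => simp only [map_add, hu, hw]; ring

lemma extendC_cplxExt_of_mem_Lam01 {j : E →ₗ[ℝ] E} {α : E →ₗ[ℝ] ℂ} (hα : α ∈ Lam01 j)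
    (v : ℂ ⊗[ℝ] E) : extendC α (cplxExt j v) = -(I * extendC α v) := by
  induction v using TensorProduct.induction_on with
  | zero => simp
  | tmul c x => simp [show α (j x) = _ from hα x]; ring
  | add u w hu hw => simp only [map_add, hu, hw]; ring

lemma extendC_eq_zero_of_mem_Lam10_of_mem_E01 {j : E →ₗ[ℝ] E} {α : E →ₗ[ℝ] ℂ}
    (hα : α ∈ Lam10 j) {w : ℂ ⊗[ℝ] E} (hw : w ∈ E01 j) : extendC α w = 0 := by
  have h := extendC_cplxExt_of_mem_Lam10 hα w
  rw [mem_E01.1 hw, map_smul, smul_eq_mul] at h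
  linear_combination (I / 2) * h + extendC α w * I_mul_I

lemma extendC_eq_zero_of_mem_Lam01_of_mem_E10 {j : E →ₗ[ℝ] E} {α : E →ₗ[ℝ] ℂ}
    (hα : α ∈ Lam01 j) {w : ℂ ⊗[ℝ] E} (hw : w ∈ E10 j) : extendC α w = 0 := by
  rw [← conjForm_conjForm α, extendC_conjForm,
    extendC_eq_zero_of_mem_Lam10_of_mem_E01 (conjForm_mem_Lam10 hα) (conjTensor_mem_E01 hw),
    map_zero]

lemma eq_zero_of_forall_extendC_eq_zero {v : ℂ ⊗[ℝ] E}
    (h : ∀ β : E →ₗ[ℝ] ℂ, extendC β v = 0) : v = 0 := by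
  rw [← Module.forall_dual_apply_eq_zero_iff ℂ]
  intro φ
  convert h ((φ.restrictScalars ℝ).comp (TensorProduct.mk ℝ ℂ E 1))
  refine TensorProduct.AlgebraTensorModule.ext fun c x => ?_
  rw [extendC_tmul, ← smul_eq_mul, LinearMap.comp_apply, TensorProduct.mk_apply,
    LinearMap.restrictScalars_apply, ← map_smul, TensorProduct.smul_tmul', smul_eq_mul, mul_one]

lemma exists_Lam10_add_Lam01 {j : E →ₗ[ℝ] E} (hj : IsCplxStruct j) (β : E →ₗ[ℝ] ℂ) :
    ∃ β₁ ∈ Lam10 j, ∃ β₂ ∈ Lam01 j, β = β₁ + β₂ := by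
  refine ⟨(2⁻¹ : ℂ) • (β - I • (β ∘ₗ j)), fun x => ?_,
    (2⁻¹ : ℂ) • (β + I • (β ∘ₗ j)), fun x => ?_, ?_⟩
  · simp only [LinearMap.smul_apply, LinearMap.sub_apply, LinearMap.comp_apply,
      smul_eq_mul, hj x, map_neg]
    linear_combination (2⁻¹ * β (j x)) * I_mul_I
  · simp only [LinearMap.smul_apply, LinearMap.add_apply, LinearMap.comp_apply,
      smul_eq_mul, hj x, map_neg]
    linear_combination (2⁻¹ * β (j x)) * I_mul_I
  · ext x
    simp only [LinearMap.add_apply, LinearMap.smul_apply, LinearMap.sub_apply,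
      LinearMap.comp_apply, smul_eq_mul]
    ring

lemma mem_E01_iff_forall_Lam10 {j : E →ₗ[ℝ] E} (hj : IsCplxStruct j) {v : ℂ ⊗[ℝ] E} :
    v ∈ E01 j ↔ ∀ α ∈ Lam10 j, extendC α v = 0 := by
  refine ⟨fun hv α hα => extendC_eq_zero_of_mem_Lam10_of_mem_E01 hα hv, fun h => ?_⟩
  rw [mem_E01, ← sub_eq_zero]
  refine eq_zero_of_forall_extendC_eq_zero fun β => ?_
  obtain ⟨β₁, hβ₁, β₂, hβ₂, rfl⟩ := exists_Lam10_add_Lam01 hj β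
  simp only [extendC_add, LinearMap.add_apply, map_sub, map_smul, smul_eq_mul,
    extendC_cplxExt_of_mem_Lam10 hβ₁, extendC_cplxExt_of_mem_Lam01 hβ₂, h β₁ hβ₁]
  ring

lemma eq_zero_of_mem_E10_of_forall_Lam10 {j : E →ₗ[ℝ] E} (hj : IsCplxStruct j)
    {w : ℂ ⊗[ℝ] E} (hw : w ∈ E10 j) (h : ∀ α ∈ Lam10 j, extendC α w = 0) : w = 0 :=
  (Submodule.disjoint_def.1 (disjoint_E10_E01 j)) w hw ((mem_E01_iff_forall_Lam10 hj).2 h)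

@[simp] lemma omC_tmul (ω : LinearMap.BilinForm ℝ E) (a b : ℂ) (x y : E) :
    omC ω (a ⊗ₜ[ℝ] x) (b ⊗ₜ[ℝ] y) = (ω x y : ℝ) • (a * b) :=
  LinearMap.BilinForm.baseChange_tmul ω a x b y

lemma omC_swap {ω : LinearMap.BilinForm ℝ E} (halt : OmAlt ω) (v w : ℂ ⊗[ℝ] E) :
    omC ω v w = -omC ω w v := by
  have hskew (x y : E) : ω x y = -ω y x := by
    have h := halt (x + y)
    simp only [map_add, LinearMap.add_apply, halt x, halt y] at h
    linarith
  induction v using TensorProduct.induction_on with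
  | zero => simp
  | tmul a x =>
    induction w using TensorProduct.induction_on with
    | zero => simp
    | tmul b y => simp [hskew x y, mul_comm]
    | add w₁ w₂ h₁ h₂ => simp only [map_add, LinearMap.add_apply, h₁, h₂]; ring
  | add v₁ v₂ h₁ h₂ => simp only [map_add, LinearMap.add_apply, h₁, h₂]; ring

lemma omC_cplxExt {ω : LinearMap.BilinForm ℝ E} {j : E →ₗ[ℝ] E} (hc : OmCompat ω j)
    (v w : ℂ ⊗[ℝ] E) : omC ω (cplxExt j v) (cplxExt j w) = omC ω v w := by
  induction v using TensorProduct.induction_on with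
  | zero => simp
  | tmul a x =>
    induction w using TensorProduct.induction_on with
    | zero => simp
    | tmul b y => simp [hc x y]
    | add w₁ w₂ h₁ h₂ => simp only [map_add, h₁, h₂]
  | add v₁ v₂ h₁ h₂ => simp only [map_add, LinearMap.add_apply, h₁, h₂]

-- `ω(v, w) = ω(jv, jw) = c² ω(v, w) = -ω(v, w)`
lemma omC_eq_zero_of_cplxExt_eq_smul {ω : LinearMap.BilinForm ℝ E} {j : E →ₗ[ℝ] E}
    (hc : OmCompat ω j) {c : ℂ} (hcc : c * c = -1) {v w : ℂ ⊗[ℝ] E}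
    (hv : cplxExt j v = c • v) (hw : cplxExt j w = c • w) : omC ω v w = 0 := by
  have h := omC_cplxExt hc v w
  simp only [hv, hw, map_smul, LinearMap.smul_apply, smul_eq_mul] at h
  linear_combination -h / 2 + (omC ω v w / 2) * hcc

lemma omC_eq_zero_of_mem_E10 {ω : LinearMap.BilinForm ℝ E} {j : E →ₗ[ℝ] E}
    (hc : OmCompat ω j) {v w : ℂ ⊗[ℝ] E} (hv : v ∈ E10 j) (hw : w ∈ E10 j) :
    omC ω v w = 0 :=
  omC_eq_zero_of_cplxExt_eq_smul hc I_mul_I (mem_E10.1 hv) (mem_E10.1 hw)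

lemma omC_eq_zero_of_mem_E01 {ω : LinearMap.BilinForm ℝ E} {j : E →ₗ[ℝ] E}
    (hc : OmCompat ω j) {v w : ℂ ⊗[ℝ] E} (hv : v ∈ E01 j) (hw : w ∈ E01 j) :
    omC ω v w = 0 :=
  omC_eq_zero_of_cplxExt_eq_smul hc (by simp) (mem_E01.1 hv) (mem_E01.1 hw)

lemma exists_one_tmul_eq_add_conjTensor (v : ℂ ⊗[ℝ] E) :
    ∃ x : E, (1 : ℂ) ⊗ₜ[ℝ] x = v + conjTensor v := by
  induction v using TensorProduct.induction_on with
  | zero => exact ⟨0, by simp⟩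
  | tmul c y =>
    refine ⟨(2 * c.re) • y, ?_⟩
    rw [conjTensor_tmul, ← TensorProduct.add_tmul, TensorProduct.tmul_smul,
      TensorProduct.smul_tmul']
    congr 1
    simp [Complex.ext_iff, two_mul]
  | add u w hu hw =>
    obtain ⟨x, hx⟩ := hu
    obtain ⟨y, hy⟩ := hw
    exact ⟨x + y, by rw [TensorProduct.tmul_add, hx, hy, map_add]; abel⟩

lemma exists_mem_E10_mem_E01_add {j : E →ₗ[ℝ] E} (hj : IsCplxStruct j) (v : ℂ ⊗[ℝ] E) :
    ∃ a ∈ E10 j, ∃ b ∈ E01 j, v = a + b := by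
  refine ⟨(2⁻¹ : ℂ) • (v - I • cplxExt j v), ?_, (2⁻¹ : ℂ) • (v + I • cplxExt j v), ?_, by module⟩
  · rw [mem_E10, map_smul, map_sub, map_smul, cplxExt_cplxExt hj]
    match_scalars
    · linear_combination (2⁻¹ : ℂ) * I_mul_I
    · ring
  · rw [mem_E01, map_smul, map_add, map_smul, cplxExt_cplxExt hj]
    match_scalars
    · linear_combination (2⁻¹ : ℂ) * I_mul_I
    · ring

lemma exists_mem_E10_one_tmul_eq {j : E →ₗ[ℝ] E} (hj : IsCplxStruct j) (x : E) :
    ∃ Z ∈ E10 j, (1 : ℂ) ⊗ₜ[ℝ] x = Z + conjTensor Z := by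
  obtain ⟨a, ha, b, hb, hab⟩ := exists_mem_E10_mem_E01_add hj ((1 : ℂ) ⊗ₜ[ℝ] x)
  have hconj : conjTensor a + conjTensor b = a + b := by
    rw [← map_add, ← hab, conjTensor_tmul, map_one]
  -- `a - b̄ = ā - b` lies in `E^{1,0} ∩ E^{0,1} = 0`
  have hb' : a - conjTensor b = 0 := by
    refine Submodule.disjoint_def.1 (disjoint_E10_E01 j) _ (sub_mem ha (conjTensor_mem_E10 hb)) ?_
    rw [show a - conjTensor b = conjTensor a - b by linear_combination (norm := module) -hconj]
    exact sub_mem (conjTensor_mem_E01 ha) hb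
  refine ⟨a, ha, ?_⟩
  rw [hab, sub_eq_zero.1 hb', conjTensor_conjTensor]

lemma sub_map_eq_zero_iff {j : E →ₗ[ℝ] E} (f : E10 j →ₗ[ℂ] E01 j) (X : E10 j) :
    (X : ℂ ⊗[ℝ] E) - (f X : ℂ ⊗[ℝ] E) = 0 ↔ (X : ℂ ⊗[ℝ] E) = 0 := by
  refine ⟨fun h => Submodule.disjoint_def.1 (disjoint_E10_E01 j) _ X.2 ?_, fun h => ?_⟩
  · rw [sub_eq_zero.1 h]
    exact (f X).2
  · simp [(Submodule.coe_eq_zero).1 h]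

lemma eq_zero_of_add_conjTensor_eq_zero {j : E →ₗ[ℝ] E} {Z : ℂ ⊗[ℝ] E} (hZ : Z ∈ E10 j)
    (h : Z + conjTensor Z = 0) : Z = 0 := by
  refine Submodule.disjoint_def.1 (disjoint_E10_E01 j) Z hZ ?_
  rw [eq_neg_of_add_eq_zero_left h]
  exact Submodule.neg_mem _ (conjTensor_mem_E01 hZ)

lemma ofReal_omega_apply_eq {ω : LinearMap.BilinForm ℝ E} (halt : OmAlt ω) {j : E →ₗ[ℝ] E}
    (hc : OmCompat ω j) {x : E} {Z : ℂ ⊗[ℝ] E} (hZ : Z ∈ E10 j)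
    (hx : (1 : ℂ) ⊗ₜ[ℝ] x = Z + conjTensor Z) :
    (ω x (j x) : ℂ) = 2 * (-I * omC ω Z (conjTensor Z)) := by
  have hZ' := conjTensor_mem_E01 hZ
  have h : (ω x (j x) : ℂ) = omC ω ((1 : ℂ) ⊗ₜ[ℝ] x) (cplxExt j ((1 : ℂ) ⊗ₜ[ℝ] x)) := by
    simp [Complex.real_smul]
  rw [h, hx, map_add (cplxExt j), mem_E10.1 hZ, mem_E01.1 hZ']
  simp only [map_add, map_smul, LinearMap.add_apply, smul_eq_mul,
    omC_eq_zero_of_mem_E10 hc hZ hZ, omC_eq_zero_of_mem_E01 hc hZ' hZ',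
    omC_swap halt (conjTensor Z) Z]
  ring

lemma omPos_iff_forall_mem_E10 {ω : LinearMap.BilinForm ℝ E} (halt : OmAlt ω)
    {j : E →ₗ[ℝ] E} (hj : IsCplxStruct j) (hc : OmCompat ω j) :
    OmPos ω j ↔ ∀ Z ∈ E10 j, Z ≠ 0 →
      ∃ r : ℝ, 0 < r ∧ -I * omC ω Z (conjTensor Z) = (r : ℂ) := by
  constructor
  · intro hpos Z hZ hZ0
    obtain ⟨x, hx⟩ := exists_one_tmul_eq_add_conjTensor Z
    have hx0 : x ≠ 0 := by
      rintro rfl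
      exact hZ0 (eq_zero_of_add_conjTensor_eq_zero hZ (by rw [← hx, TensorProduct.tmul_zero]))
    refine ⟨ω x (j x) / 2, by linarith [hpos x hx0], ?_⟩
    push_cast
    rw [ofReal_omega_apply_eq halt hc hZ hx]
    ring
  · intro h x hx0
    obtain ⟨Z, hZ, hx⟩ := exists_mem_E10_one_tmul_eq hj x
    have hZ0 : Z ≠ 0 := by
      rintro rfl
      exact hx0 (by simpa using hx)
    obtain ⟨r, hr, hZr⟩ := h Z hZ hZ0
    have : (ω x (j x) : ℂ) = (2 * r : ℝ) := by
      rw [ofReal_omega_apply_eq halt hc hZ hx, hZr]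
      push_cast; ring
    rw [Complex.ofReal_inj.1 this]
    positivity

section Graph

variable {L₁ L₂ L₃ L₄ : Submodule ℂ (E →ₗ[ℝ] ℂ)} {V₁ V₂ : Submodule ℂ (ℂ ⊗[ℝ] E)}

def IsGraph (L : Submodule ℂ (E →ₗ[ℝ] ℂ)) (μ : L₁ →ₗ[ℂ] L₂) : Prop :=
  ∀ γ : E →ₗ[ℝ] ℂ, γ ∈ L ↔ ∃ α : L₁, γ = (α : E →ₗ[ℝ] ℂ) + (μ α : E →ₗ[ℝ] ℂ)

def IsTranspose (μ : L₁ →ₗ[ℂ] L₂) (μt : V₂ →ₗ[ℂ] V₁) : Prop :=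
  ∀ (α : L₁) (X : V₂), extendC (α : E →ₗ[ℝ] ℂ) (μt X : ℂ ⊗[ℝ] E) =
    extendC (μ α : E →ₗ[ℝ] ℂ) (X : ℂ ⊗[ℝ] E)

def IsConjugate (μ : L₁ →ₗ[ℂ] L₂) (μbar : L₃ →ₗ[ℂ] L₄) : Prop :=
  ∀ (α : L₃) (β : L₁), (β : E →ₗ[ℝ] ℂ) = conjForm (α : E →ₗ[ℝ] ℂ) →
    (μbar α : E →ₗ[ℝ] ℂ) = conjForm (μ β : E →ₗ[ℝ] ℂ)

variable {j₀ j : E →ₗ[ℝ] E} {μ : Lam10 j₀ →ₗ[ℂ] Lam01 j₀} {μt : E01 j₀ →ₗ[ℂ] E10 j₀}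
  {μbar : Lam01 j₀ →ₗ[ℂ] Lam10 j₀} {μbart : E10 j₀ →ₗ[ℂ] E01 j₀}

lemma IsTranspose.extendC_add_apply_add (hμt : IsTranspose μ μt) (α : Lam10 j₀) (a : E10 j₀)
    (b : E01 j₀) :
    extendC ((α : E →ₗ[ℝ] ℂ) + (μ α : E →ₗ[ℝ] ℂ)) ((a : ℂ ⊗[ℝ] E) + (b : ℂ ⊗[ℝ] E)) =
      extendC α ((a : ℂ ⊗[ℝ] E) + (μt b : ℂ ⊗[ℝ] E)) := by
  rw [extendC_add, LinearMap.add_apply, map_add, map_add, map_add,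
    extendC_eq_zero_of_mem_Lam10_of_mem_E01 α.2 b.2,
    extendC_eq_zero_of_mem_Lam01_of_mem_E10 (μ α).2 a.2, hμt]
  ring

lemma add_mem_E01_iff (hj₀ : IsCplxStruct j₀) (hj : IsCplxStruct j) (hgraph : IsGraph (Lam10 j) μ)
    (hμt : IsTranspose μ μt) (a : E10 j₀) (b : E01 j₀) :
    (a : ℂ ⊗[ℝ] E) + (b : ℂ ⊗[ℝ] E) ∈ E01 j ↔ (a : ℂ ⊗[ℝ] E) + (μt b : ℂ ⊗[ℝ] E) = 0 := by
  rw [mem_E01_iff_forall_Lam10 hj]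
  constructor
  · intro h
    refine eq_zero_of_mem_E10_of_forall_Lam10 hj₀ (add_mem a.2 (μt b).2) fun α hα => ?_
    rw [← hμt.extendC_add_apply_add ⟨α, hα⟩]
    exact h _ ((hgraph _).2 ⟨⟨α, hα⟩, rfl⟩)
  · intro h γ hγ
    obtain ⟨α, rfl⟩ := (hgraph γ).1 hγ
    rw [hμt.extendC_add_apply_add, h, map_zero]

lemma sub_mu_transpose_mem_E01 (hj₀ : IsCplxStruct j₀) (hj : IsCplxStruct j)
    (hgraph : IsGraph (Lam10 j) μ) (hμt : IsTranspose μ μt) (W : E01 j₀) :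
    (W : ℂ ⊗[ℝ] E) - (μt W : ℂ ⊗[ℝ] E) ∈ E01 j := by
  have h := (add_mem_E01_iff hj₀ hj hgraph hμt (-μt W) W).2 (by simp)
  rwa [Submodule.coe_neg, neg_add_eq_sub] at h

lemma exists_eq_sub_mu_transpose (hj₀ : IsCplxStruct j₀) (hj : IsCplxStruct j)
    (hgraph : IsGraph (Lam10 j) μ) (hμt : IsTranspose μ μt) {v : ℂ ⊗[ℝ] E} (hv : v ∈ E01 j) :
    ∃ W : E01 j₀, v = (W : ℂ ⊗[ℝ] E) - (μt W : ℂ ⊗[ℝ] E) := by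
  obtain ⟨a, ha, b, hb, rfl⟩ := exists_mem_E10_mem_E01_add hj₀ v
  have h := (add_mem_E01_iff hj₀ hj hgraph hμt ⟨a, ha⟩ ⟨b, hb⟩).1 hv
  exact ⟨⟨b, hb⟩, by linear_combination (norm := module) h⟩

lemma omC_mu_transpose_comm {ω : LinearMap.BilinForm ℝ E} (halt : OmAlt ω)
    (hj₀ : IsCplxStruct j₀) (hc₀ : OmCompat ω j₀) (hj : IsCplxStruct j) (hc : OmCompat ω j)
    (hgraph : IsGraph (Lam10 j) μ) (hμt : IsTranspose μ μt) (W₁ W₂ : E01 j₀) :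
    omC ω W₁ (μt W₂) = omC ω W₂ (μt W₁) := by
  have h := omC_eq_zero_of_mem_E01 hc (sub_mu_transpose_mem_E01 hj₀ hj hgraph hμt W₁)
    (sub_mu_transpose_mem_E01 hj₀ hj hgraph hμt W₂)
  simp only [map_sub, LinearMap.sub_apply, omC_eq_zero_of_mem_E01 hc₀ W₁.2 W₂.2,
    omC_eq_zero_of_mem_E10 hc₀ (μt W₁).2 (μt W₂).2, omC_swap halt (μt W₁ : ℂ ⊗[ℝ] E)] at h
  linear_combination -h

lemma conjTensor_mubar_transpose (hj₀ : IsCplxStruct j₀) (hμbar : IsConjugate μ μbar)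
    (hμt : IsTranspose μ μt) (hμbart : IsTranspose μbar μbart) (X : E10 j₀) (W : E01 j₀)
    (hW : (W : ℂ ⊗[ℝ] E) = conjTensor (X : ℂ ⊗[ℝ] E)) :
    conjTensor (μbart X : ℂ ⊗[ℝ] E) = μt W := by
  rw [← sub_eq_zero]
  refine eq_zero_of_mem_E10_of_forall_Lam10 hj₀
    (sub_mem (conjTensor_mem_E10 (μbart X).2) (μt W).2) fun α hα => ?_
  have hα' : conjForm α ∈ Lam01 j₀ := conjForm_mem_Lam01 hα
  rw [map_sub, sub_eq_zero]
  calc extendC α (conjTensor (μbart X : ℂ ⊗[ℝ] E))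
      = conj (extendC (conjForm α) (μbart X : ℂ ⊗[ℝ] E)) := by
        rw [extendC_conjForm, conj_conj]
    _ = conj (extendC (μbar ⟨conjForm α, hα'⟩ : E →ₗ[ℝ] ℂ) X) := by
        rw [← hμbart ⟨conjForm α, hα'⟩ X]
    _ = conj (extendC (conjForm (μ ⟨α, hα⟩ : E →ₗ[ℝ] ℂ)) X) := by
        rw [hμbar ⟨conjForm α, hα'⟩ ⟨α, hα⟩ (conjForm_conjForm α).symm]
    _ = extendC α (μt W : ℂ ⊗[ℝ] E) := by
        rw [extendC_conjForm, conj_conj, ← hW, hμt ⟨α, hα⟩]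

lemma mem_E10_iff_exists_sub_mubar_transpose (hj₀ : IsCplxStruct j₀) (hj : IsCplxStruct j)
    (hgraph : IsGraph (Lam10 j) μ) (hμbar : IsConjugate μ μbar) (hμt : IsTranspose μ μt)
    (hμbart : IsTranspose μbar μbart) {Z : ℂ ⊗[ℝ] E} :
    Z ∈ E10 j ↔ ∃ X : E10 j₀, Z = (X : ℂ ⊗[ℝ] E) - (μbart X : ℂ ⊗[ℝ] E) := by
  constructor
  · intro hZ
    obtain ⟨W, hW⟩ := exists_eq_sub_mu_transpose hj₀ hj hgraph hμt (conjTensor_mem_E01 hZ)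
    let X : E10 j₀ := ⟨conjTensor (W : ℂ ⊗[ℝ] E), conjTensor_mem_E10 W.2⟩
    have hX := conjTensor_mubar_transpose hj₀ hμbar hμt hμbart X W (conjTensor_conjTensor _).symm
    refine ⟨X, ?_⟩
    rw [← conjTensor_conjTensor Z, hW, map_sub, ← hX, conjTensor_conjTensor]
  · rintro ⟨X, rfl⟩
    let W : E01 j₀ := ⟨conjTensor (X : ℂ ⊗[ℝ] E), conjTensor_mem_E01 X.2⟩
    have hX := conjTensor_mubar_transpose hj₀ hμbar hμt hμbart X W rfl
    rw [← conjTensor_conjTensor ((X : ℂ ⊗[ℝ] E) - _), map_sub, hX]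
    exact conjTensor_mem_E10 (sub_mu_transpose_mem_E01 hj₀ hj hgraph hμt W)

lemma omC_sub_mubar_transpose {ω : LinearMap.BilinForm ℝ E} (halt : OmAlt ω)
    (hj₀ : IsCplxStruct j₀) (hc₀ : OmCompat ω j₀) (hj : IsCplxStruct j) (hc : OmCompat ω j)
    (hgraph : IsGraph (Lam10 j) μ) (hμbar : IsConjugate μ μbar) (hμt : IsTranspose μ μt)
    (hμbart : IsTranspose μbar μbart) (X : E10 j₀) :
    omC ω ((X : ℂ ⊗[ℝ] E) - (μbart X : ℂ ⊗[ℝ] E))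
        (conjTensor ((X : ℂ ⊗[ℝ] E) - (μbart X : ℂ ⊗[ℝ] E))) =
      omC ω ((X : ℂ ⊗[ℝ] E) - (μt (μbart X) : ℂ ⊗[ℝ] E)) (conjTensor (X : ℂ ⊗[ℝ] E)) := by
  let W : E01 j₀ := ⟨conjTensor (X : ℂ ⊗[ℝ] E), conjTensor_mem_E01 X.2⟩
  have hsymm := omC_mu_transpose_comm halt hj₀ hc₀ hj hc hgraph hμt (μbart X) W
  rw [map_sub conjTensor, conjTensor_mubar_transpose hj₀ hμbar hμt hμbart X W rfl]
  change omC ω _ ((W : ℂ ⊗[ℝ] E) - _) = omC ω _ (W : ℂ ⊗[ℝ] E)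
  simp only [map_sub, LinearMap.sub_apply, omC_eq_zero_of_mem_E10 hc₀ X.2 (μt W).2,
    omC_eq_zero_of_mem_E01 hc₀ (μbart X).2 W.2, hsymm, omC_swap halt (W : ℂ ⊗[ℝ] E)]
  ring

end Graph

theorem statement9_general {E : Type*} [AddCommGroup E] [Module ℝ E]
    (ω : LinearMap.BilinForm ℝ E)
    (halt : OmAlt ω)
    (j₀ : E →ₗ[ℝ] E) (hj₀ : IsCplxStruct j₀)
    (hc₀ : OmCompat ω j₀)
    (j : E →ₗ[ℝ] E) (hj : IsCplxStruct j) (hc : OmCompat ω j)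
    -- `Λ^{1,0}_j E*` is the graph of `μ : Λ^{1,0}_{j₀}E* → Λ^{0,1}_{j₀}E*`
    (μ : Lam10 j₀ →ₗ[ℂ] Lam01 j₀)
    (hgraph : ∀ γ : E →ₗ[ℝ] ℂ, γ ∈ Lam10 j ↔
      ∃ α : Lam10 j₀, γ = (α : E →ₗ[ℝ] ℂ) + ((μ α : E →ₗ[ℝ] ℂ)))
    -- the conjugate map `μ̄ : Λ^{0,1}_{j₀}E* → Λ^{1,0}_{j₀}E*`, `μ̄(α) = conj (μ (conj α))`
    (μbar : Lam01 j₀ →ₗ[ℂ] Lam10 j₀)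
    (hμbar : ∀ (α : Lam01 j₀) (β : Lam10 j₀),
      (β : E →ₗ[ℝ] ℂ) = conjForm (α : E →ₗ[ℝ] ℂ) →
        ((μbar α : E →ₗ[ℝ] ℂ)) = conjForm ((μ β : E →ₗ[ℝ] ℂ)))
    -- the transposes `μᵗ : E^{0,1}_{j₀} → E^{1,0}_{j₀}` and `μ̄ᵗ : E^{1,0}_{j₀} → E^{0,1}_{j₀}`
    (μt : E01 j₀ →ₗ[ℂ] E10 j₀)
    (hμt : ∀ (α : Lam10 j₀) (X : E01 j₀),
      extendC (α : E →ₗ[ℝ] ℂ) ((μt X : ℂ ⊗[ℝ] E)) =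
        extendC ((μ α : E →ₗ[ℝ] ℂ)) ((X : ℂ ⊗[ℝ] E)))
    (μbart : E10 j₀ →ₗ[ℂ] E01 j₀)
    (hμbart : ∀ (β : Lam01 j₀) (X : E10 j₀),
      extendC (β : E →ₗ[ℝ] ℂ) ((μbart X : ℂ ⊗[ℝ] E)) =
        extendC ((μbar β : E →ₗ[ℝ] ℂ)) ((X : ℂ ⊗[ℝ] E))) :
    OmPos ω j ↔
      ∀ X : E10 j₀, (X : ℂ ⊗[ℝ] E) ≠ 0 →
        ∃ r : ℝ, 0 < r ∧
          -Complex.I *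
            omC ω ((X : ℂ ⊗[ℝ] E) - ((μt (μbart X) : ℂ ⊗[ℝ] E)))
              (conjTensor (X : ℂ ⊗[ℝ] E)) = (r : ℂ) := by
  have hE10 (Z : ℂ ⊗[ℝ] E) :=
    mem_E10_iff_exists_sub_mubar_transpose (Z := Z) hj₀ hj hgraph hμbar hμt hμbart
  have hω := omC_sub_mubar_transpose halt hj₀ hc₀ hj hc hgraph hμbar hμt hμbart
  rw [omPos_iff_forall_mem_E10 halt hj hc]
  constructor
  · intro h X hX
    rw [← hω]
    exact h _ ((hE10 _).2 ⟨X, rfl⟩) ((sub_map_eq_zero_iff μbart X).not.2 hX)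
  · rintro h _ hZ hZ0
    obtain ⟨X, rfl⟩ := (hE10 _).1 hZ
    rw [hω]
    exact h X ((sub_map_eq_zero_iff μbart X).not.1 hZ0)

/-- `j` is positive iff `Id − μᵗ ∘ μ̄ᵗ` is positive definite for the
Hermitian inner product `h(X, Y) := −i·ω(X, Ȳ)` on `E^{1,0}_{j₀}`. -/
theorem statement9 {E : Type*} [AddCommGroup E] [Module ℝ E] [FiniteDimensional ℝ E]
    (n : ℕ) (hn : 0 < n) (ω : LinearMap.BilinForm ℝ E)
    (hdim : Module.finrank ℝ E = 2 * n)
    (halt : OmAlt ω) (hnd : OmNondeg ω)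
    (j₀ : E →ₗ[ℝ] E) (hj₀ : IsCplxStruct j₀)
    (hc₀ : OmCompat ω j₀) (hp₀ : OmPos ω j₀)
    (j : E →ₗ[ℝ] E) (hj : IsCplxStruct j) (hc : OmCompat ω j)
    -- `Λ^{1,0}_j E*` is the graph of `μ : Λ^{1,0}_{j₀}E* → Λ^{0,1}_{j₀}E*`
    (μ : Lam10 j₀ →ₗ[ℂ] Lam01 j₀)
    (hgraph : ∀ γ : E →ₗ[ℝ] ℂ, γ ∈ Lam10 j ↔
      ∃ α : Lam10 j₀, γ = (α : E →ₗ[ℝ] ℂ) + ((μ α : E →ₗ[ℝ] ℂ)))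
    -- the conjugate map `μ̄ : Λ^{0,1}_{j₀}E* → Λ^{1,0}_{j₀}E*`, `μ̄(α) = conj (μ (conj α))`
    (μbar : Lam01 j₀ →ₗ[ℂ] Lam10 j₀)
    (hμbar : ∀ (α : Lam01 j₀) (β : Lam10 j₀),
      (β : E →ₗ[ℝ] ℂ) = conjForm (α : E →ₗ[ℝ] ℂ) →
        ((μbar α : E →ₗ[ℝ] ℂ)) = conjForm ((μ β : E →ₗ[ℝ] ℂ)))
    -- the transposes `μᵗ : E^{0,1}_{j₀} → E^{1,0}_{j₀}` and `μ̄ᵗ : E^{1,0}_{j₀} → E^{0,1}_{j₀}`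
    (μt : E01 j₀ →ₗ[ℂ] E10 j₀)
    (hμt : ∀ (α : Lam10 j₀) (X : E01 j₀),
      extendC (α : E →ₗ[ℝ] ℂ) ((μt X : ℂ ⊗[ℝ] E)) =
        extendC ((μ α : E →ₗ[ℝ] ℂ)) ((X : ℂ ⊗[ℝ] E)))
    (μbart : E10 j₀ →ₗ[ℂ] E01 j₀)
    (hμbart : ∀ (β : Lam01 j₀) (X : E10 j₀),
      extendC (β : E →ₗ[ℝ] ℂ) ((μbart X : ℂ ⊗[ℝ] E)) =
        extendC ((μbar β : E →ₗ[ℝ] ℂ)) ((X : ℂ ⊗[ℝ] E))) :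
    OmPos ω j ↔
      ∀ X : E10 j₀, (X : ℂ ⊗[ℝ] E) ≠ 0 →
        ∃ r : ℝ, 0 < r ∧
          -Complex.I *
            omC ω ((X : ℂ ⊗[ℝ] E) - ((μt (μbart X) : ℂ ⊗[ℝ] E)))
              (conjTensor (X : ℂ ⊗[ℝ] E)) = (r : ℂ) :=
  statement9_general ω halt j₀ hj₀ hc₀ j hj hc μ hgraph μbar hμbar μt hμt μbart hμbart

end
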